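/- For every degree n ∈ ℕ and every ω > 0 there exists a unitary rational best approximation: some r ∈ 𝒰_n with ‖r − exp(ω·)‖ = inf_{u ∈ 𝒰_n} ‖u − exp(ω·)‖. -/

import Mathlib

open Polynomial

noncomputable section

/-- `p†(z) := conj(p)(−z)`: conjugate the coefficients of `p` and substitute `−z`. -/
def pdag (p : Polynomial ℂ) : Polynomial ℂ :=
  (p.map (starRingEnd ℂ)).comp (-Polynomial.X)

/-- `𝒰 n`: the unitary rational functions of degree `(n,n)`, i.e. rational functions
of the form `p†/p` with `p` a nonzero complex polynomial of degree at most `n`. -/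
def unitaryClass (n : ℕ) : Set (RatFunc ℂ) :=
  {r | ∃ p : Polynomial ℂ, p ≠ 0 ∧ p.natDegree ≤ n ∧ r = RatFunc.mk (pdag p) p}

/-- Evaluation of a rational function at the imaginary point `i·x`. -/
def ieval (r : RatFunc ℂ) (x : ℝ) : ℂ :=
  RatFunc.eval (RingHom.id ℂ) (Complex.I * (x : ℂ)) r

/-- The uniform approximation error `‖r − exp(ω·)‖ = sup_{x∈[−1,1]} |r(ix) − e^{iωx}|`. -/
def errNorm (ω : ℝ) (r : RatFunc ℂ) : ℝ :=
  sSup ((fun x : ℝ => ‖ieval r x - Complex.exp (Complex.I * ω * x)‖) ''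
    Set.Icc (-1 : ℝ) 1)

/-- The maximal phase error `max_{x∈[−1,1]} |g(x) − ωx|`. -/
def phaseErrSup (ω : ℝ) (g : ℝ → ℝ) : ℝ :=
  sSup ((fun x : ℝ => |g x - ω * x|) '' Set.Icc (-1 : ℝ) 1)

/-- `g` is a phase function for `r ∈ 𝒰 n`: for some `m ≤ n`, `θ ∈ ℝ` and poles
`s j = ξ j + i μ j` with `ξ j ≠ 0`, `r` has the product representation
`r(z) = (−1)^m e^{iθ} ∏ (z + conj s_j)/(z − s_j)` and
`g(x) = θ + 2 Σ_j arctan((x − μ j)/ξ j)` with `r(ix) = e^{i g(x)}`. -/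
def IsPhaseFun (n : ℕ) (r : RatFunc ℂ) (g : ℝ → ℝ) : Prop :=
  ∃ (m : ℕ) (θ : ℝ) (μ ξ : Fin m → ℝ), m ≤ n ∧ (∀ j, ξ j ≠ 0) ∧
    r = RatFunc.mk
      (Polynomial.C ((-1 : ℂ) ^ m * Complex.exp (θ * Complex.I)) *
        ∏ j, (Polynomial.X + Polynomial.C (starRingEnd ℂ ((ξ j : ℂ) + (μ j : ℂ) * Complex.I))))
      (∏ j, (Polynomial.X - Polynomial.C ((ξ j : ℂ) + (μ j : ℂ) * Complex.I))) ∧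
    (∀ x : ℝ, g x = θ + 2 * ∑ j, Real.arctan ((x - μ j) / ξ j)) ∧
    (∀ x : ℝ, ieval r x = Complex.exp (Complex.I * g x))

/-- The phase error of `g` equioscillates between `m` points in `[−1,1]`. -/
def EquiOsc (ω : ℝ) (g : ℝ → ℝ) (m : ℕ) : Prop :=
  ∃ (η : Fin m → ℝ) (ε : ℝ), StrictMono η ∧ (∀ j, η j ∈ Set.Icc (-1 : ℝ) 1) ∧
    (ε = 1 ∨ ε = -1) ∧
    ∀ j : Fin m, g (η j) - ω * η j = ε * (-1 : ℝ) ^ (j : ℕ) * phaseErrSup ω g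

end

/-!
Writing `p = ∑ wᵢ Xⁱ`, the class `𝒰 n` is the image of the unit sphere of coefficient vectors
`w ∈ ℂⁿ⁺¹` (rescaling `p` by a nonzero real does not change `p†/p`). The error is a lower
semicontinuous function of `w`, so it attains its infimum on this compact sphere.

Lower semicontinuity: a root `ix` of `p` on the imaginary axis is also a root of `p†`, since
`p†(ix) = conj (p(ix))`. Cancelling these, every `p†/p` has a representative whose denominator
does not vanish on `iℝ`; it is unimodular there and its error is continuous on `[-1, 1]`. Hence
the supremum defining the error may be taken over the dense set of points where `p(ix) ≠ 0`, and
at each such point the pointwise error `|conj (p(ix))/p(ix) - e^{iωx}|` is continuous in `w`.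
-/

open Polynomial Filter Topology Set Complex ComplexConjugate

universe u

theorem RatFunc.eval_mk_of_eval₂_ne_zero {K L : Type u} [Field K] [Field L] (f : K →+* L)
    {a : L} {p q : K[X]} (hq : q.eval₂ f a ≠ 0) :
    RatFunc.eval f a (RatFunc.mk p q) = p.eval₂ f a / q.eval₂ f a := by
  have hq₀ : q ≠ 0 := by rintro rfl; simp at hq
  set r := RatFunc.mk p q
  have hden : r.denom.eval₂ f a ≠ 0 := by
    obtain ⟨c, hc⟩ := (RatFunc.denom_dvd hq₀).mpr ⟨p, RatFunc.mk_eq_div p q⟩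
    rw [hc, eval₂_mul] at hq
    exact left_ne_zero_of_mul hq
  have hcross : r.num * q = p * r.denom :=
    (RatFunc.num_mul_eq_mul_denom_iff hq₀).mpr (RatFunc.mk_eq_div p q)
  rw [RatFunc.eval, div_eq_div_iff hden hq, ← eval₂_mul, ← eval₂_mul, hcross]

theorem RatFunc.mk_mul_mul_left {K : Type*} [Field K] {d : K[X]} (hd : d ≠ 0) (p q : K[X]) :
    RatFunc.mk (d * p) (d * q) = RatFunc.mk p q := by
  simp only [RatFunc.mk_eq_div, map_mul,
    mul_div_mul_left _ _ (RatFunc.algebraMap_ne_zero hd)]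

theorem pdag_mul (p q : ℂ[X]) : pdag (p * q) = pdag p * pdag q := by
  simp [pdag, Polynomial.map_mul, mul_comp]

theorem pdag_C (c : ℂ) : pdag (C c) = C (conj c) := by
  simp [pdag]

theorem pdag_X_sub_C_I_mul (x : ℝ) : pdag (X - C (I * x)) = -(X - C (I * x)) := by
  have hconj : conj (I * x) = -(I * x) := by simp
  simp only [pdag, Polynomial.map_sub, map_X, map_C, hconj, C_neg, sub_comp, neg_comp, X_comp,
    C_comp]
  ring

theorem eval_pdag_I_mul (p : ℂ[X]) (x : ℝ) :
    (pdag p).eval (I * x) = conj (p.eval (I * x)) := by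
  have hconj : -(I * x) = conj (I * x) := by simp
  rw [pdag, eval_comp, eval_neg, eval_X, eval_map, hconj, eval₂_at_apply]

theorem mk_pdag_C_ofReal_mul {t : ℝ} (ht : t ≠ 0) (p : ℂ[X]) :
    RatFunc.mk (pdag (C (t : ℂ) * p)) (C (t : ℂ) * p) = RatFunc.mk (pdag p) p := by
  rw [pdag_mul, pdag_C, conj_ofReal]
  exact RatFunc.mk_mul_mul_left (C_ne_zero.mpr (ofReal_ne_zero.mpr ht)) _ _

theorem exists_mk_pdag_eq_and_eval_I_mul_ne_zero {p : ℂ[X]} (hp : p ≠ 0) :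
    ∃ q : ℂ[X], (∀ x : ℝ, q.eval (I * x) ≠ 0) ∧
      RatFunc.mk (pdag q) q = RatFunc.mk (pdag p) p := by
  induction hd : p.natDegree using Nat.strong_induction_on generalizing p with
  | _ d ih =>
  by_cases hroot : ∀ x : ℝ, p.eval (I * x) ≠ 0
  · exact ⟨p, hroot, rfl⟩
  · obtain ⟨x, hx⟩ := not_forall_not.mp hroot
    obtain ⟨q₀, rfl⟩ := dvd_iff_isRoot.mpr hx
    have hlin : X - C (I * (x : ℂ)) ≠ 0 := X_sub_C_ne_zero _
    have hq₀ : q₀ ≠ 0 := right_ne_zero_of_mul hp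
    have hI : (C I : ℂ[X]) ≠ 0 := C_ne_zero.mpr I_ne_zero
    have hdeg : q₀.natDegree < d := by
      rw [← hd, natDegree_mul hlin hq₀, natDegree_X_sub_C]; omega
    obtain ⟨q, hqroot, hqmk⟩ :=
      ih _ (by rwa [natDegree_C_mul I_ne_zero]) (mul_ne_zero hI hq₀) rfl
    refine ⟨q, hqroot, ?_⟩
    -- both `p†/p` and `(I q₀)†/(I q₀)` reduce to `-q₀†/q₀`
    have hcancel : ∀ c : ℂ[X], c ≠ 0 →
        RatFunc.mk (-c * pdag q₀) (c * q₀) = RatFunc.mk (-pdag q₀) q₀ := fun c hc => by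
      rw [neg_mul, ← mul_neg, RatFunc.mk_mul_mul_left hc]
    rw [hqmk, pdag_mul, pdag_mul, pdag_C, conj_I, C_neg, pdag_X_sub_C_I_mul,
      hcancel _ hI, hcancel _ hlin]

theorem ieval_mk_pdag {q : ℂ[X]} {x : ℝ} (hq : q.eval (I * x) ≠ 0) :
    ieval (RatFunc.mk (pdag q) q) x = conj (q.eval (I * x)) / q.eval (I * x) := by
  rw [ieval, RatFunc.eval_mk_of_eval₂_ne_zero _ hq]
  exact congrArg (· / _) (eval_pdag_I_mul q x)

theorem norm_ieval_mk_pdag {p : ℂ[X]} (hp : p ≠ 0) (x : ℝ) :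
    ‖ieval (RatFunc.mk (pdag p) p) x‖ = 1 := by
  obtain ⟨q, hq, hqp⟩ := exists_mk_pdag_eq_and_eval_I_mul_ne_zero hp
  rw [← hqp, ieval_mk_pdag (hq x), norm_div, norm_conj, div_self (norm_ne_zero_iff.mpr (hq x))]

theorem continuous_ieval_mk_pdag {p : ℂ[X]} (hp : p ≠ 0) :
    Continuous (ieval (RatFunc.mk (pdag p) p)) := by
  obtain ⟨q, hq, hqp⟩ := exists_mk_pdag_eq_and_eval_I_mul_ne_zero hp
  have hqI : Continuous fun x : ℝ => q.eval (I * x) := by fun_prop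
  have hieval : ieval (RatFunc.mk (pdag q) q) =
      fun x : ℝ => conj (q.eval (I * x)) / q.eval (I * x) :=
    funext fun x => ieval_mk_pdag (hq x)
  rw [← hqp, hieval]
  exact (continuous_conj.comp hqI).div hqI hq

noncomputable def errAt (ω : ℝ) (r : RatFunc ℂ) (x : ℝ) : ℝ :=
  ‖ieval r x - Complex.exp (Complex.I * ω * x)‖

theorem continuous_errAt_mk_pdag {p : ℂ[X]} (hp : p ≠ 0) (ω : ℝ) :
    Continuous (errAt ω (RatFunc.mk (pdag p) p)) := by
  have := continuous_ieval_mk_pdag hp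
  unfold errAt
  fun_prop

theorem errAt_mk_pdag_le_two {p : ℂ[X]} (hp : p ≠ 0) (ω x : ℝ) :
    errAt ω (RatFunc.mk (pdag p) p) x ≤ 2 := by
  have hexp : ‖Complex.exp (I * ω * x)‖ = 1 := by
    rw [show I * ω * x = ((ω * x : ℝ) : ℂ) * I by push_cast; ring]
    exact norm_exp_ofReal_mul_I _
  calc errAt ω (RatFunc.mk (pdag p) p) x
      ≤ ‖ieval (RatFunc.mk (pdag p) p) x‖ + ‖Complex.exp (I * ω * x)‖ := norm_sub_le _ _
    _ = 2 := by rw [norm_ieval_mk_pdag hp, hexp]; norm_num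

theorem errAt_mk_pdag_le_errNorm {p : ℂ[X]} (hp : p ≠ 0) (ω : ℝ) {x : ℝ}
    (hx : x ∈ Icc (-1 : ℝ) 1) :
    errAt ω (RatFunc.mk (pdag p) p) x ≤ errNorm ω (RatFunc.mk (pdag p) p) :=
  le_csSup ⟨2, forall_mem_image.mpr fun y _ => errAt_mk_pdag_le_two hp ω y⟩
    (mem_image_of_mem _ hx)

theorem Icc_subset_closure_Icc_diff_of_countable {a b : ℝ} (hab : a < b) {F : Set ℝ}
    (hF : F.Countable) : Icc a b ⊆ closure (Icc a b \ F) := by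
  calc Icc a b
      = closure (Ioo a b) := (closure_Ioo hab.ne).symm
    _ ⊆ closure (closure (Ioo a b ∩ Fᶜ)) :=
        closure_mono ((hF.dense_compl ℝ).open_subset_closure_inter isOpen_Ioo)
    _ = closure (Ioo a b ∩ Fᶜ) := closure_closure
    _ ⊆ closure (Icc a b \ F) := closure_mono fun y hy => ⟨Ioo_subset_Icc_self hy.1, hy.2⟩

theorem finite_setOf_eval_I_mul_eq_zero {p : ℂ[X]} (hp : p ≠ 0) :
    {x : ℝ | p.eval (I * x) = 0}.Finite :=
  (finite_setOfPred_isRoot hp).preimage fun s _ t _ hst => by simpa using hst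

noncomputable def unitaryOfCoeffs {m : ℕ} (w : Fin m → ℂ) : RatFunc ℂ :=
  RatFunc.mk (pdag (ofFn m w)) (ofFn m w)

theorem continuous_eval_ofFn (m : ℕ) (z : ℂ) :
    Continuous fun w : Fin m → ℂ => (ofFn m w).eval z := by
  simp only [ofFn_eq_sum_monomial, eval_finsetSum, eval_monomial]
  fun_prop

theorem lowerSemicontinuousAt_errNorm_unitaryOfCoeffs (ω : ℝ) {m : ℕ} {v : Fin m → ℂ}
    (hv : v ≠ 0) : LowerSemicontinuousAt (fun w => errNorm ω (unitaryOfCoeffs w)) v := by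
  have hp : ofFn m v ≠ 0 := (map_ne_zero_iff _ (injective_ofFn m)).mpr hv
  intro y hy
  change y < sSup (errAt ω (unitaryOfCoeffs v) '' Icc (-1) 1) at hy
  obtain ⟨_, ⟨x, hx, rfl⟩, hyx⟩ :=
    exists_lt_of_lt_csSup ((nonempty_Icc.mpr (by norm_num)).image _) hy
  obtain ⟨x', hyx', hx', hvx'⟩ :=
    mem_closure_iff.mp (Icc_subset_closure_Icc_diff_of_countable (by norm_num)
      (finite_setOf_eval_I_mul_eq_zero hp).countable hx) _
      (isOpen_lt continuous_const (continuous_errAt_mk_pdag hp ω)) hyx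
  set g : (Fin m → ℂ) → ℂ := fun w => (ofFn m w).eval (I * x')
  have hg : Continuous g := continuous_eval_ofFn m _
  have hgv : g v ≠ 0 := hvx'
  have herr : ∀ w, g w ≠ 0 →
      errAt ω (unitaryOfCoeffs w) x' = ‖conj (g w) / g w - Complex.exp (I * ω * x')‖ :=
    fun w hw => by rw [errAt, unitaryOfCoeffs, ieval_mk_pdag hw]
  have hcont : ContinuousAt (fun w => ‖conj (g w) / g w - Complex.exp (I * ω * x')‖) v :=
    (((continuous_conj.comp hg).continuousAt.div hg.continuousAt hgv).sub
      continuousAt_const).norm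
  have hyv : y < ‖conj (g v) / g v - Complex.exp (I * ω * x')‖ := by
    rw [← herr v hgv]
    exact hyx'
  filter_upwards [hg.continuousAt.eventually_ne hgv, Tendsto.eventually_const_lt hyv hcont]
    with w hw hyw
  calc y < errAt ω (unitaryOfCoeffs w) x' := by rwa [herr w hw]
    _ ≤ errNorm ω (unitaryOfCoeffs w) :=
      errAt_mk_pdag_le_errNorm (fun h => hw (by simp [g, h])) ω hx'

theorem unitaryClass_eq_image_sphere (n : ℕ) :
    unitaryClass n = unitaryOfCoeffs '' Metric.sphere (0 : Fin (n + 1) → ℂ) 1 := by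
  ext u
  constructor
  · rintro ⟨p, hp, hpn, rfl⟩
    set w₀ := toFn (n + 1) p
    have hw₀p : ofFn (n + 1) w₀ = p := ofFn_comp_toFn_eq_id_of_natDegree_lt (by omega)
    have hw₀ : w₀ ≠ 0 := by rintro h; rw [h, map_zero] at hw₀p; exact hp hw₀p.symm
    refine ⟨(‖w₀‖ : ℂ)⁻¹ • w₀,
      mem_sphere_zero_iff_norm.mpr (norm_smul_inv_norm (𝕜 := ℂ) hw₀), ?_⟩
    rw [unitaryOfCoeffs, map_smul, hw₀p, smul_eq_C_mul, ← ofReal_inv,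
      mk_pdag_C_ofReal_mul (inv_ne_zero (norm_ne_zero_iff.mpr hw₀))]
  · rintro ⟨w, hw, rfl⟩
    have hw' : w ≠ 0 := Metric.ne_of_mem_sphere hw one_ne_zero
    exact ⟨ofFn (n + 1) w, (map_ne_zero_iff _ (injective_ofFn _)).mpr hw',
      Nat.lt_succ_iff.mp (ofFn_natDegree_lt (Nat.succ_pos n) w), rfl⟩

theorem exists_unitary_best_approximation_general (n : ℕ) (ω : ℝ) :
    ∃ r ∈ unitaryClass n, (∀ u ∈ unitaryClass n, errNorm ω r ≤ errNorm ω u) ∧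
      errNorm ω r = sInf (errNorm ω '' unitaryClass n) := by
  obtain ⟨v, hv, hmin⟩ := LowerSemicontinuousOn.exists_isMinOn
    (NormedSpace.sphere_nonempty.mpr zero_le_one) (isCompact_sphere (0 : Fin (n + 1) → ℂ) 1)
    fun w hw => (lowerSemicontinuousAt_errNorm_unitaryOfCoeffs ω
      (Metric.ne_of_mem_sphere hw one_ne_zero)).lowerSemicontinuousWithinAt _
  have hleast : IsLeast (errNorm ω '' unitaryClass n) (errNorm ω (unitaryOfCoeffs v)) := by
    rw [unitaryClass_eq_image_sphere, image_image]
    exact ⟨mem_image_of_mem _ hv, forall_mem_image.mpr fun w hw => hmin hw⟩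
  exact ⟨unitaryOfCoeffs v, unitaryClass_eq_image_sphere n ▸ mem_image_of_mem _ hv,
    fun u hu => hleast.2 (mem_image_of_mem _ hu), hleast.csInf_eq.symm⟩

/-- For every degree `n` and every `ω > 0` there exists a unitary rational
best approximation: some `r ∈ 𝒰_n` with `‖r − exp(ω·)‖ = inf_{u ∈ 𝒰_n} ‖u − exp(ω·)‖`. -/
theorem exists_unitary_best_approximation (n : ℕ) (ω : ℝ) (hω : 0 < ω) :
    ∃ r ∈ unitaryClass n, (∀ u ∈ unitaryClass n, errNorm ω r ≤ errNorm ω u) ∧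
      errNorm ω r = sInf (errNorm ω '' unitaryClass n) :=
  exists_unitary_best_approximation_general n ω
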